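/- arXiv:2210.09937 — 5 statements merged into one kernel-verified Lean document; each statement's English description precedes it below -/
import Mathlib

section
/- The following derivabilities hold in the W-logics: (i) WM derives the rule from ¬(A∧B) infer ¬(□A∧◇B); (ii) WMN derives the necessitation rule from A infer □A; (iii) WMN ⊢ ¬◇⊥; (iv) WMC ⊢ □(A→B)→(□A→□B); (v) WMP ⊢ ¬□⊥; (vi) WMND ⊢ ◇⊤. -/
set_option autoImplicit false

/-- Formulas of the propositional modal language:
`A ::= p | ⊥ | A∧A | A∨A | A→A | □A | ◇A`. -/
inductive Formula : Type
  | var : ℕ → Formula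
  | bot : Formula
  | and : Formula → Formula → Formula
  | or : Formula → Formula → Formula
  | imp : Formula → Formula → Formula
  | box : Formula → Formula
  | dia : Formula → Formula
  deriving DecidableEq

/-- `¬A := A → ⊥`. -/
def Formula.neg (A : Formula) : Formula := A.imp Formula.bot

/-- `⊤ := ⊥ → ⊥`. -/
def Formula.top : Formula := Formula.bot.imp Formula.bot

/-- A specification of which additional modal axioms a logic has:
`N` (□⊤ / N-condition), `C` (C_□ together with K_◇ in W-logics),
`P` (P_□ classically / P_◇ in W-logics), `D` (□A→◇A), `T` (T_□, and T_◇ in W-logics). -/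
structure LogicSpec where
  hasN : Bool := false
  hasC : Bool := false
  hasP : Bool := false
  hasD : Bool := false
  hasT : Bool := false

/-- The names of the fourteen systems. -/
inductive LName : Type
  | M | MN | MC | K | MP | MNP | MD | MND | MCD | KD | MT | MNT | MCT | KT

/-- The axiom flags of the fourteen classical modal logics. -/
def cSpec : LName → LogicSpec
  | .M   => {}
  | .MN  => { hasN := true }
  | .MC  => { hasC := true }
  | .K   => { hasN := true, hasC := true }
  | .MP  => { hasP := true }
  | .MNP => { hasN := true, hasP := true }
  | .MD  => { hasD := true }
  | .MND => { hasN := true, hasD := true }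
  | .MCD => { hasC := true, hasD := true }
  | .KD  => { hasN := true, hasC := true, hasD := true }
  | .MT  => { hasT := true }
  | .MNT => { hasN := true, hasT := true }
  | .MCT => { hasC := true, hasT := true }
  | .KT  => { hasN := true, hasC := true, hasT := true }

/-- The axiom flags of the fourteen W-logics (WMD and WMCD include the axiom P_◇ explicitly). -/
def wSpec : LName → LogicSpec
  | .MD  => { hasP := true, hasD := true }
  | .MCD => { hasC := true, hasP := true, hasD := true }
  | n    => cSpec n

/-- Hilbert-style provability in the W-logic determined by the flags `S`:
intuitionistic propositional logic plus dual∧, the monotonicity rules M_□ and M_◇,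
and, according to the flags, N_□, C_□ together with K_◇, P_◇, D, T_□ together with T_◇. -/
inductive WProof (S : LogicSpec) : Formula → Prop
  | ax1 (A B : Formula) : WProof S (A.imp (B.imp A))
  | ax2 (A B C : Formula) : WProof S ((A.imp (B.imp C)).imp ((A.imp B).imp (A.imp C)))
  | andI (A B : Formula) : WProof S (A.imp (B.imp (A.and B)))
  | andE1 (A B : Formula) : WProof S ((A.and B).imp A)
  | andE2 (A B : Formula) : WProof S ((A.and B).imp B)
  | orI1 (A B : Formula) : WProof S (A.imp (A.or B))
  | orI2 (A B : Formula) : WProof S (B.imp (A.or B))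
  | orE (A B C : Formula) : WProof S ((A.imp C).imp ((B.imp C).imp ((A.or B).imp C)))
  | botE (A : Formula) : WProof S (Formula.bot.imp A)
  | mp {A B : Formula} : WProof S (A.imp B) → WProof S A → WProof S B
  | dualAnd (A : Formula) : WProof S (((Formula.box A).and (Formula.dia A.neg)).neg)
  | monBox {A B : Formula} : WProof S (A.imp B) → WProof S ((Formula.box A).imp (Formula.box B))
  | monDia {A B : Formula} : WProof S (A.imp B) → WProof S ((Formula.dia A).imp (Formula.dia B))
  | nBox : S.hasN = true → WProof S (Formula.box Formula.top)
  | cBox (A B : Formula) : S.hasC = true →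
      WProof S (((Formula.box A).and (Formula.box B)).imp (Formula.box (A.and B)))
  | kDia (A B : Formula) : S.hasC = true →
      WProof S ((Formula.box (A.imp B)).imp ((Formula.dia A).imp (Formula.dia B)))
  | pDia : S.hasP = true → WProof S (Formula.dia Formula.top)
  | dAx (A : Formula) : S.hasD = true → WProof S ((Formula.box A).imp (Formula.dia A))
  | tBox (A : Formula) : S.hasT = true → WProof S ((Formula.box A).imp A)
  | tDia (A : Formula) : S.hasT = true → WProof S (A.imp (Formula.dia A))

namespace WProof

variable {S : LogicSpec}

lemma idd (A : Formula) : WProof S (A.imp A) :=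
  mp (mp (ax2 A (A.imp A) A) (ax1 A (A.imp A))) (ax1 A A)

lemma ap {X A B : Formula} (h1 : WProof S (X.imp (A.imp B))) (h2 : WProof S (X.imp A)) :
    WProof S (X.imp B) := mp (mp (ax2 X A B) h1) h2

lemma lift {X A : Formula} (h : WProof S A) : WProof S (X.imp A) := mp (ax1 A X) h

lemma comp {A B C : Formula} (h1 : WProof S (A.imp B)) (h2 : WProof S (B.imp C)) :
    WProof S (A.imp C) := ap (lift h2) h1

lemma pair {X A B : Formula} (h1 : WProof S (X.imp A)) (h2 : WProof S (X.imp B)) :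
    WProof S (X.imp (A.and B)) := ap (ap (lift (andI A B)) h1) h2

lemma curry {A B C : Formula} (h : WProof S ((A.and B).imp C)) :
    WProof S (A.imp (B.imp C)) :=
  comp (andI A B) (mp (ax2 B (A.and B) C) (lift h))

lemma swap {A B C : Formula} (h : WProof S (A.imp (B.imp C))) :
    WProof S (B.imp (A.imp C)) :=
  curry (ap (comp (andE2 B A) h) (andE1 B A))

lemma rule_i {A B : Formula} (h : WProof S ((A.and B).neg)) :
    WProof S (((Formula.box A).and (Formula.dia B)).neg) :=
  comp (pair (andE1 _ _) (comp (andE2 _ _) (monDia (swap (curry h)))))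
    (dualAnd A)

end WProof

/-- (i) WM derives the rule from ¬(A∧B) infer ¬(□A∧◇B);
(ii) WMN derives necessitation; (iii) WMN ⊢ ¬◇⊥; (iv) WMC ⊢ □(A→B)→(□A→□B);
(v) WMP ⊢ ¬□⊥; (vi) WMND ⊢ ◇⊤. -/
theorem statement4 :
    (∀ A B : Formula, WProof (wSpec .M) ((A.and B).neg) →
        WProof (wSpec .M) (((Formula.box A).and (Formula.dia B)).neg)) ∧
    (∀ A : Formula, WProof (wSpec .MN) A → WProof (wSpec .MN) (Formula.box A)) ∧
    WProof (wSpec .MN) (Formula.dia Formula.bot).neg ∧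
    (∀ A B : Formula, WProof (wSpec .MC)
        ((Formula.box (A.imp B)).imp ((Formula.box A).imp (Formula.box B)))) ∧
    WProof (wSpec .MP) (Formula.box Formula.bot).neg ∧
    WProof (wSpec .MND) (Formula.dia Formula.top) := by
  refine ⟨fun A B h => WProof.rule_i h, fun A h => ?_, ?_, fun A B => ?_, ?_, ?_⟩
  · exact WProof.mp (WProof.monBox (WProof.lift h)) (WProof.nBox rfl)
  · -- ¬◇⊥ : from ¬(□⊤ ∧ ◇⊥) and □⊤
    have h1 : WProof (wSpec .MN) ((Formula.top.and Formula.bot).neg) :=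
      WProof.andE2 _ _
    have h2 := WProof.rule_i h1
    exact WProof.comp
      (WProof.pair (WProof.lift (WProof.nBox rfl)) (WProof.idd _)) h2
  · exact WProof.curry (WProof.comp (WProof.cBox _ _ rfl)
      (WProof.monBox (WProof.ap (WProof.andE1 _ _) (WProof.andE2 _ _))))
  · -- ¬□⊥ : dualAnd ⊥ gives ¬(□⊥ ∧ ◇⊤) since ¬⊥ = ⊤
    exact WProof.comp
      (WProof.pair (WProof.idd _) (WProof.lift (WProof.pDia rfl)))
      (WProof.dualAnd Formula.bot)
  · exact WProof.mp (WProof.dAx _ rfl) (WProof.nBox rfl)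
end

section
/- The logic WK := IPL + dual∧ + M_□ + M_◇ + C_□ + K_◇ + N_□ is equivalent (derives exactly the same theorems) to Wijesekera's axiomatisation IPL + necessitation rule (from A infer □A) + K_□ (□(A→B)→(□A→□B)) + K_◇ (□(A→B)→(◇A→◇B)) + N_◇ (¬◇⊥). -/
set_option autoImplicit false

/-- Wijesekera's original axiomatisation of WK: IPL + necessitation + K_□ + K_◇ + N_◇. -/
inductive WijProof : Formula → Prop
  | ax1 (A B : Formula) : WijProof (A.imp (B.imp A))
  | ax2 (A B C : Formula) : WijProof ((A.imp (B.imp C)).imp ((A.imp B).imp (A.imp C)))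
  | andI (A B : Formula) : WijProof (A.imp (B.imp (A.and B)))
  | andE1 (A B : Formula) : WijProof ((A.and B).imp A)
  | andE2 (A B : Formula) : WijProof ((A.and B).imp B)
  | orI1 (A B : Formula) : WijProof (A.imp (A.or B))
  | orI2 (A B : Formula) : WijProof (B.imp (A.or B))
  | orE (A B C : Formula) : WijProof ((A.imp C).imp ((B.imp C).imp ((A.or B).imp C)))
  | botE (A : Formula) : WijProof (Formula.bot.imp A)
  | mp {A B : Formula} : WijProof (A.imp B) → WijProof A → WijProof B
  | nec {A : Formula} : WijProof A → WijProof (Formula.box A)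
  | kBox (A B : Formula) :
      WijProof ((Formula.box (A.imp B)).imp ((Formula.box A).imp (Formula.box B)))
  | kDia (A B : Formula) :
      WijProof ((Formula.box (A.imp B)).imp ((Formula.dia A).imp (Formula.dia B)))
  | nDia : WijProof (Formula.dia Formula.bot).neg

section Helpers

/-- Abstract Hilbert-style implication/conjunction fragment. -/
structure Hilb (P : Formula → Prop) : Prop where
  ax1 : ∀ (A B : Formula), P (A.imp (B.imp A))
  ax2 : ∀ (A B C : Formula), P ((A.imp (B.imp C)).imp ((A.imp B).imp (A.imp C)))
  andI : ∀ (A B : Formula), P (A.imp (B.imp (A.and B)))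
  andE1 : ∀ (A B : Formula), P ((A.and B).imp A)
  andE2 : ∀ (A B : Formula), P ((A.and B).imp B)
  mp : ∀ {A B : Formula}, P (A.imp B) → P A → P B

namespace Hilb

variable {P : Formula → Prop}

theorem idp (h : Hilb P) (A : Formula) : P (A.imp A) :=
  h.mp (h.mp (h.ax2 A (A.imp A) A) (h.ax1 A (A.imp A))) (h.ax1 A A)

theorem k1 (h : Hilb P) {A : Formula} (B : Formula) (hA : P A) : P (B.imp A) :=
  h.mp (h.ax1 A B) hA

theorem distr (h : Hilb P) {A B C : Formula} (h1 : P (A.imp (B.imp C))) (h2 : P (A.imp B)) :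
    P (A.imp C) := h.mp (h.mp (h.ax2 A B C) h1) h2

theorem trans (h : Hilb P) {A B C : Formula} (h1 : P (A.imp B)) (h2 : P (B.imp C)) :
    P (A.imp C) := h.distr (h.k1 A h2) h1

theorem trans2 (h : Hilb P) {X Y Z W : Formula} (h1 : P (X.imp (Y.imp Z))) (h2 : P (Z.imp W)) :
    P (X.imp (Y.imp W)) :=
  h.trans h1 (h.mp (h.ax2 Y Z W) (h.k1 Y h2))

theorem curry (h : Hilb P) {X Y Z : Formula} (h1 : P ((X.and Y).imp Z)) : P (X.imp (Y.imp Z)) :=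
  h.trans2 (h.andI X Y) h1

theorem uncurry (h : Hilb P) {X Y Z : Formula} (h1 : P (X.imp (Y.imp Z))) : P ((X.and Y).imp Z) :=
  h.distr (h.trans (h.andE1 X Y) h1) (h.andE2 X Y)

theorem negIntro (h : Hilb P) (A : Formula) : P (A.imp ((A.neg).imp Formula.bot)) :=
  h.trans (h.ax1 A A.neg)
    (h.mp (h.ax2 A.neg A Formula.bot) (h.idp A.neg))

end Hilb

theorem wHilb (S : LogicSpec) : Hilb (WProof S) :=
  ⟨WProof.ax1, WProof.ax2, WProof.andI, WProof.andE1, WProof.andE2,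
    fun h1 h2 => WProof.mp h1 h2⟩

theorem wijHilb : Hilb WijProof :=
  ⟨WijProof.ax1, WijProof.ax2, WijProof.andI, WijProof.andE1, WijProof.andE2,
    fun h1 h2 => WijProof.mp h1 h2⟩

theorem wij_monBox {A B : Formula} (h : WijProof (A.imp B)) :
    WijProof ((Formula.box A).imp (Formula.box B)) :=
  WijProof.mp (WijProof.kBox A B) (WijProof.nec h)

theorem wij_monDia {A B : Formula} (h : WijProof (A.imp B)) :
    WijProof ((Formula.dia A).imp (Formula.dia B)) :=
  WijProof.mp (WijProof.kDia A B) (WijProof.nec h)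

end Helpers

/-- WK (= IPL + dual∧ + M_□ + M_◇ + C_□ + K_◇ + N_□) is equivalent to
Wijesekera's axiomatisation. -/
theorem statement5 (A : Formula) : WProof (wSpec .K) A ↔ WijProof A := by
  constructor
  · intro h
    induction h with
    | ax1 A B => exact WijProof.ax1 A B
    | ax2 A B C => exact WijProof.ax2 A B C
    | andI A B => exact WijProof.andI A B
    | andE1 A B => exact WijProof.andE1 A B
    | andE2 A B => exact WijProof.andE2 A B
    | orI1 A B => exact WijProof.orI1 A B
    | orI2 A B => exact WijProof.orI2 A B
    | orE A B C => exact WijProof.orE A B C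
    | botE A => exact WijProof.botE A
    | mp _ _ ih1 ih2 => exact WijProof.mp ih1 ih2
    | dualAnd A =>
      have h1 : WijProof ((Formula.box A).imp (Formula.box (A.neg.imp Formula.bot))) :=
        wij_monBox (wijHilb.negIntro A)
      have h2 : WijProof ((Formula.box A).imp
          ((Formula.dia A.neg).imp (Formula.dia Formula.bot))) :=
        wijHilb.trans h1 (WijProof.kDia A.neg Formula.bot)
      have h3 : WijProof ((Formula.box A).imp ((Formula.dia A.neg).imp Formula.bot)) :=
        wijHilb.trans2 h2 WijProof.nDia
      exact wijHilb.uncurry h3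
    | monBox _ ih => exact wij_monBox ih
    | monDia _ ih => exact wij_monDia ih
    | nBox => exact WijProof.nec (wijHilb.idp Formula.bot)
    | cBox A B =>
      have h1 : WijProof ((Formula.box A).imp (Formula.box (B.imp (A.and B)))) :=
        wij_monBox (WijProof.andI A B)
      have h2 : WijProof ((Formula.box A).imp
          ((Formula.box B).imp (Formula.box (A.and B)))) :=
        wijHilb.trans h1 (WijProof.kBox B (A.and B))
      exact wijHilb.uncurry h2
    | kDia A B => exact WijProof.kDia A B
    | pDia hp => simp [wSpec, cSpec] at hp
    | dAx A hd => simp [wSpec, cSpec] at hd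
    | tBox A ht => simp [wSpec, cSpec] at ht
    | tDia A ht => simp [wSpec, cSpec] at ht
  · intro h
    have H := wHilb (wSpec .K)
    induction h with
    | ax1 A B => exact WProof.ax1 A B
    | ax2 A B C => exact WProof.ax2 A B C
    | andI A B => exact WProof.andI A B
    | andE1 A B => exact WProof.andE1 A B
    | andE2 A B => exact WProof.andE2 A B
    | orI1 A B => exact WProof.orI1 A B
    | orI2 A B => exact WProof.orI2 A B
    | orE A B C => exact WProof.orE A B C
    | botE A => exact WProof.botE A
    | mp _ _ ih1 ih2 => exact WProof.mp ih1 ih2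
    | @nec A _ ih =>
      have h1 : WProof (wSpec .K) (Formula.top.imp A) := H.k1 Formula.top ih
      exact WProof.mp (WProof.monBox h1) (WProof.nBox rfl)
    | kBox A B =>
      have h1 : WProof (wSpec .K) ((((A.imp B).and A)).imp B) :=
        H.uncurry (H.idp (A.imp B))
      have h2 : WProof (wSpec .K)
          ((((Formula.box (A.imp B)).and (Formula.box A))).imp (Formula.box B)) :=
        H.trans (WProof.cBox (A.imp B) A rfl) (WProof.monBox h1)
      exact H.curry h2
    | kDia A B => exact WProof.kDia A B rfl
    | nDia =>
      have d1 : WProof (wSpec .K)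
          ((Formula.dia Formula.bot).imp (Formula.dia Formula.top.neg)) :=
        WProof.monDia (WProof.botE Formula.top.neg)
      have d2 : WProof (wSpec .K) ((Formula.dia Formula.top.neg).imp
          ((Formula.box Formula.top).and (Formula.dia Formula.top.neg))) :=
        WProof.mp (WProof.andI _ _) (WProof.nBox rfl)
      exact H.trans (H.trans d1 d2) (WProof.dualAnd Formula.top)
end

section
/- For every W-logic WL among the fourteen systems and every propositional variable p: WL does not derive p ∨ ¬p, and WL does not derive □p ∨ ◇¬p. -/
set_option autoImplicit false

/-- Gödel implication on the 3-element chain. -/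
def impv (a b : Fin 3) : Fin 3 := if a ≤ b then 2 else b

/-- 3-valued evaluation, with identity modalities and all variables at 1. -/
def val : Formula → Fin 3
  | .var _ => 1
  | .bot => 0
  | .and A B => min (val A) (val B)
  | .or A B => max (val A) (val B)
  | .imp A B => impv (val A) (val B)
  | .box A => val A
  | .dia A => val A

lemma val_sound {S : LogicSpec} {A : Formula} (h : WProof S A) : val A = 2 := by
  induction h with
  | mp _ _ ih1 ih2 =>
      simp only [val] at ih1
      exact (by decide : ∀ a b : Fin 3, impv a b = 2 → a = 2 → b = 2) _ _ ih1 ih2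
  | monBox _ ih => simp only [val] at ih ⊢; exact ih
  | monDia _ ih => simp only [val] at ih ⊢; exact ih
  | _ =>
      simp only [val, Formula.neg, Formula.top]
      first
      | rfl
      | exact (by decide : ∀ a : Fin 3, impv a a = 2) _
      | exact (by decide : ∀ a : Fin 3, impv 0 a = 2) _
      | exact (by decide : ∀ a : Fin 3, impv (min a (impv a 0)) 0 = 2) _
      | exact (by decide : ∀ a b : Fin 3, impv a (impv b a) = 2) _ _
      | exact (by decide : ∀ a b : Fin 3, impv (min a b) a = 2) _ _
      | exact (by decide : ∀ a b : Fin 3, impv (min a b) b = 2) _ _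
      | exact (by decide : ∀ a b : Fin 3, impv a (max a b) = 2) _ _
      | exact (by decide : ∀ a b : Fin 3, impv b (max a b) = 2) _ _
      | exact (by decide : ∀ a b : Fin 3, impv a (impv b (min a b)) = 2) _ _
      | exact (by decide : ∀ a b : Fin 3, impv (min a b) (min a b) = 2) _ _
      | exact (by decide : ∀ a b : Fin 3, impv (impv a b) (impv (impv a b) (impv a b)) = 2) _ _
      | exact (by decide : ∀ a b : Fin 3, impv (impv a b) (impv a b) = 2) _ _
      | exact (by decide : ∀ a b c : Fin 3,
          impv (impv a (impv b c)) (impv (impv a b) (impv a c)) = 2) _ _ _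
      | exact (by decide : ∀ a b c : Fin 3,
          impv (impv a c) (impv (impv b c) (impv (max a b) c)) = 2) _ _ _

/-- no W-logic among the fourteen derives `p ∨ ¬p` or `□p ∨ ◇¬p`. -/
theorem statement8 (L : LName) (p : ℕ) :
    ¬ WProof (wSpec L) ((Formula.var p).or (Formula.var p).neg) ∧
    ¬ WProof (wSpec L) ((Formula.box (Formula.var p)).or (Formula.dia (Formula.var p).neg)) := by
  constructor <;> intro h <;> have := val_sound h <;>
    simp only [val, Formula.neg] at this <;> revert this <;> decide
end

section
/- Every W-logic WL among the fourteen systems has the disjunction property: for all formulas A and B, if WL ⊢ A ∨ B then WL ⊢ A or WL ⊢ B. -/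
set_option autoImplicit false

/-- Identity: `⊢ A → A`. -/
lemma WProof.id (S : LogicSpec) (A : Formula) : WProof S (A.imp A) :=
  (WProof.ax2 A (A.imp A) A).mp (WProof.ax1 A (A.imp A)) |>.mp (WProof.ax1 A A)

/-- The Kleene/Aczel slash relation. -/
def slash (S : LogicSpec) : Formula → Prop
  | .var n => WProof S (.var n)
  | .bot => WProof S .bot
  | .and A B => slash S A ∧ slash S B
  | .or A B => slash S A ∨ slash S B
  | .imp A B => WProof S (A.imp B) ∧ (slash S A → slash S B)
  | .box A => WProof S (.box A) ∧ slash S A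
  | .dia A => WProof S (.dia A)

/-- Soundness of the slash. -/
lemma slash.sound {S : LogicSpec} : ∀ {A : Formula}, slash S A → WProof S A
  | .var _, h => h
  | .bot, h => h
  | .and A B, ⟨hA, hB⟩ => ((WProof.andI A B).mp hA.sound).mp hB.sound
  | .or A B, Or.inl hA => (WProof.orI1 A B).mp hA.sound
  | .or A B, Or.inr hB => (WProof.orI2 A B).mp hB.sound
  | .imp _ _, ⟨h, _⟩ => h
  | .box _, ⟨h, _⟩ => h
  | .dia _, h => h

/-- From a proof of `⊥`, everything is slashed. -/
lemma slash.ofBot {S : LogicSpec} (hb : WProof S .bot) : ∀ (A : Formula), slash S A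
  | .var n => (WProof.botE (.var n)).mp hb
  | .bot => hb
  | .and A B => ⟨slash.ofBot hb A, slash.ofBot hb B⟩
  | .or A B => Or.inl (slash.ofBot hb A)
  | .imp A B => ⟨(WProof.botE (A.imp B)).mp hb, fun _ => slash.ofBot hb B⟩
  | .box A => ⟨(WProof.botE (.box A)).mp hb, slash.ofBot hb A⟩
  | .dia A => (WProof.botE (.dia A)).mp hb

/-- Every provable formula is slashed. -/
lemma slash.ofProof {S : LogicSpec} {A : Formula} (h : WProof S A) : slash S A := by
  induction h with
  | ax1 A B =>
      exact ⟨WProof.ax1 A B, fun hA => ⟨(WProof.ax1 A B).mp hA.sound, fun _ => hA⟩⟩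
  | ax2 A B C =>
      refine ⟨WProof.ax2 A B C, fun ⟨h1, f1⟩ => ⟨(WProof.ax2 A B C).mp h1, ?_⟩⟩
      rintro ⟨h2, f2⟩
      exact ⟨((WProof.ax2 A B C).mp h1).mp h2, fun hA => (f1 hA).2 (f2 hA)⟩
  | andI A B =>
      exact ⟨WProof.andI A B, fun hA =>
        ⟨(WProof.andI A B).mp hA.sound, fun hB => ⟨hA, hB⟩⟩⟩
  | andE1 A B => exact ⟨WProof.andE1 A B, fun h => h.1⟩
  | andE2 A B => exact ⟨WProof.andE2 A B, fun h => h.2⟩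
  | orI1 A B => exact ⟨WProof.orI1 A B, fun h => Or.inl h⟩
  | orI2 A B => exact ⟨WProof.orI2 A B, fun h => Or.inr h⟩
  | orE A B C =>
      refine ⟨WProof.orE A B C, fun ⟨h1, f1⟩ => ⟨(WProof.orE A B C).mp h1, ?_⟩⟩
      rintro ⟨h2, f2⟩
      refine ⟨((WProof.orE A B C).mp h1).mp h2, ?_⟩
      rintro (hA | hB)
      · exact f1 hA
      · exact f2 hB
  | botE A => exact ⟨WProof.botE A, fun hb => slash.ofBot hb A⟩
  | mp _ _ ih1 ih2 => exact ih1.2 ih2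
  | dualAnd A =>
      refine ⟨WProof.dualAnd A, ?_⟩
      rintro ⟨⟨hbox, -⟩, hdia⟩
      exact (WProof.dualAnd A).mp (((WProof.andI _ _).mp hbox).mp hdia)
  | monBox h ih =>
      exact ⟨WProof.monBox h, fun ⟨hb, hA⟩ => ⟨(WProof.monBox h).mp hb, ih.2 hA⟩⟩
  | monDia h _ =>
      exact ⟨WProof.monDia h, fun hd => (WProof.monDia h).mp hd⟩
  | nBox hN =>
      exact ⟨WProof.nBox hN, WProof.id S Formula.bot, fun hb => hb⟩
  | cBox A B hC =>
      refine ⟨WProof.cBox A B hC, ?_⟩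
      rintro ⟨⟨hbA, sA⟩, ⟨hbB, sB⟩⟩
      exact ⟨(WProof.cBox A B hC).mp (((WProof.andI _ _).mp hbA).mp hbB), sA, sB⟩
  | kDia A B hC =>
      refine ⟨WProof.kDia A B hC, ?_⟩
      rintro ⟨hb, -⟩
      exact ⟨(WProof.kDia A B hC).mp hb, fun hd => ((WProof.kDia A B hC).mp hb).mp hd⟩
  | pDia hP => exact WProof.pDia hP
  | dAx A hD =>
      exact ⟨WProof.dAx A hD, fun ⟨hb, _⟩ => (WProof.dAx A hD).mp hb⟩
  | tBox A hT => exact ⟨WProof.tBox A hT, fun ⟨_, sA⟩ => sA⟩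
  | tDia A hT =>
      exact ⟨WProof.tDia A hT, fun sA => (WProof.tDia A hT).mp sA.sound⟩

/-- every W-logic among the fourteen has the disjunction property. -/
theorem statement9 (L : LName) (A B : Formula) :
    WProof (wSpec L) (A.or B) → WProof (wSpec L) A ∨ WProof (wSpec L) B := by
  intro h
  rcases slash.ofProof h with hA | hB
  · exact Or.inl hA.sound
  · exact Or.inr hB.sound
end

section
/- Soundness: for every W-logic WL among the fourteen systems and every formula A, if WL ⊢ A then A is valid in every constructive neighbourhood model for WL. -/
set_option autoImplicit false

/-- A constructive neighbourhood model (CNM): a preorder `le` of intuitionistic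
accessibility, a neighbourhood function `N`, and a hereditary valuation `V`. -/
structure CNM (W : Type) where
  le : W → W → Prop
  le_refl : ∀ w, le w w
  le_trans : ∀ u v w, le u v → le v w → le u w
  N : W → Set (Set W)
  V : ℕ → Set W
  hered : ∀ (p : ℕ) (u v : W), le u v → u ∈ V p → v ∈ V p

/-- Forcing in a constructive neighbourhood model:
`w ⊩ B→C` iff for all `v ≥ w`, `v ⊩ B` implies `v ⊩ C`;
`w ⊩ □B` iff for all `v ≥ w` there is `α ∈ N(v)` with `u ⊩ B` for all `u ∈ α`;
`w ⊩ ◇B` iff for all `v ≥ w` and all `α ∈ N(v)` there is `u ∈ α` with `u ⊩ B`. -/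
def CNM.force {W : Type} (M : CNM W) : Formula → W → Prop
  | Formula.var p, w => w ∈ M.V p
  | Formula.bot, _ => False
  | Formula.and A B, w => M.force A w ∧ M.force B w
  | Formula.or A B, w => M.force A w ∨ M.force B w
  | Formula.imp A B, w => ∀ v, M.le w v → M.force A v → M.force B v
  | Formula.box A, w => ∀ v, M.le w v → ∃ α ∈ M.N v, ∀ u ∈ α, M.force A u
  | Formula.dia A, w => ∀ v, M.le w v → ∀ α ∈ M.N v, ∃ u ∈ α, M.force A u

/-- `M` is a constructive neighbourhood model for the W-logic with flags `S`: it
satisfies the condition (C), (N), (T), (D), (P) corresponding to each modal axiom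
of the logic among C_□ (with K_◇), N_□, T_□ (with T_◇), D, P_◇. -/
def CNM.forLogic {W : Type} (S : LogicSpec) (M : CNM W) : Prop :=
  (S.hasC = true → ∀ w, ∀ α ∈ M.N w, ∀ β ∈ M.N w, α ∩ β ∈ M.N w) ∧
  (S.hasN = true → ∀ w, M.N w ≠ ∅) ∧
  (S.hasT = true → ∀ w, ∀ α ∈ M.N w, w ∈ α) ∧
  (S.hasD = true → ∀ w, ∀ α ∈ M.N w, ∀ β ∈ M.N w, (α ∩ β).Nonempty) ∧
  (S.hasP = true → ∀ w, ∅ ∉ M.N w)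

theorem force_mono {W : Type} (M : CNM W) (A : Formula) :
    ∀ w v : W, M.le w v → M.force A w → M.force A v := by
  induction A with
  | var p => exact fun w v h hw => M.hered p w v h hw
  | bot => exact fun _ _ _ h => h
  | and A B ihA ihB => exact fun w v h hw => ⟨ihA w v h hw.1, ihB w v h hw.2⟩
  | or A B ihA ihB =>
      exact fun w v h hw => hw.elim (fun x => Or.inl (ihA w v h x))
        (fun x => Or.inr (ihB w v h x))
  | imp A B _ _ =>
      exact fun w v h hw u hvu ha => hw u (M.le_trans w v u h hvu) ha
  | box A _ =>
      exact fun w v h hw u hvu => hw u (M.le_trans w v u h hvu)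
  | dia A _ =>
      exact fun w v h hw u hvu => hw u (M.le_trans w v u h hvu)

theorem wSound {S : LogicSpec} {A : Formula} (hp : WProof S A) :
    ∀ (W : Type) (M : CNM W), M.forLogic S → ∀ w : W, M.force A w := by
  induction hp with
  | ax1 A B =>
      intro W M _ w v _ ha u hvu _
      exact force_mono M A v u hvu ha
  | ax2 A B C =>
      intro W M _ w v hv h1 u hvu h2 t hut h3
      exact h1 t (M.le_trans v u t hvu hut) h3 t (M.le_refl t)
        (h2 t hut h3)
  | andI A B =>
      intro W M _ w v _ ha u hvu hb
      exact ⟨force_mono M A v u hvu ha, hb⟩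
  | andE1 A B => intro W M _ w v _ h; exact h.1
  | andE2 A B => intro W M _ w v _ h; exact h.2
  | orI1 A B => intro W M _ w v _ h; exact Or.inl h
  | orI2 A B => intro W M _ w v _ h; exact Or.inr h
  | orE A B C =>
      intro W M _ w v hv h1 u hvu h2 t hut h3
      exact h3.elim (fun h => h1 t (M.le_trans v u t hvu hut) h)
        (fun h => h2 t hut h)
  | botE A => intro W M _ w v _ h; exact h.elim
  | mp _ _ ih1 ih2 =>
      intro W M hM w
      exact ih1 W M hM w w (M.le_refl w) (ih2 W M hM w)
  | dualAnd A =>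
      intro W M _ w v _ h
      obtain ⟨hb, hd⟩ := h
      obtain ⟨α, hα, hall⟩ := hb v (M.le_refl v)
      obtain ⟨u, hu, hneg⟩ := hd v (M.le_refl v) α hα
      exact hneg u (M.le_refl u) (hall u hu)
  | monBox _ ih =>
      intro W M hM w v _ hb u hvu
      obtain ⟨α, hα, hall⟩ := hb u hvu
      exact ⟨α, hα, fun t ht => ih W M hM t t (M.le_refl t) (hall t ht)⟩
  | monDia _ ih =>
      intro W M hM w v _ hd u hvu α hα
      obtain ⟨t, ht, ha⟩ := hd u hvu α hα
      exact ⟨t, ht, ih W M hM t t (M.le_refl t) ha⟩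
  | nBox hN =>
      intro W M hM w v _
      obtain ⟨α, hα⟩ := Set.nonempty_iff_ne_empty.2 (hM.2.1 hN v)
      exact ⟨α, hα, fun u _ t _ h => h⟩
  | cBox A B hC =>
      intro W M hM w v _ h u hvu
      obtain ⟨α, hα, hA⟩ := h.1 u hvu
      obtain ⟨β, hβ, hB⟩ := h.2 u hvu
      exact ⟨α ∩ β, hM.1 hC u α hα β hβ,
        fun t ht => ⟨hA t ht.1, hB t ht.2⟩⟩
  | kDia A B hC =>
      intro W M hM w v hv hb u hvu hd t hut α hα
      obtain ⟨β, hβ, himp⟩ := hb t (M.le_trans v u t hvu hut)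
      obtain ⟨s, hs, ha⟩ := hd t hut (α ∩ β) (hM.1 hC t α hα β hβ)
      exact ⟨s, hs.1, himp s hs.2 s (M.le_refl s) ha⟩
  | pDia hP =>
      intro W M hM w v _ α hα
      rcases Set.eq_empty_or_nonempty α with he | ⟨u, hu⟩
      · exact absurd (he ▸ hα) (hM.2.2.2.2 hP v)
      · exact ⟨u, hu, fun t _ h => h⟩
  | dAx A hD =>
      intro W M hM w v _ hb u hvu α hα
      obtain ⟨β, hβ, hall⟩ := hb u hvu
      obtain ⟨t, ht⟩ := hM.2.2.2.1 hD u β hβ α hα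
      exact ⟨t, ht.2, hall t ht.1⟩
  | tBox A hT =>
      intro W M hM w v _ hb
      obtain ⟨α, hα, hall⟩ := hb v (M.le_refl v)
      exact hall v (hM.2.2.1 hT v α hα)
  | tDia A hT =>
      intro W M hM w v _ ha u hvu α hα
      exact ⟨u, hM.2.2.1 hT u α hα, force_mono M A v u hvu ha⟩

/-- soundness of the fourteen W-logics with respect to their
constructive neighbourhood models. -/
theorem statement14 (L : LName) (A : Formula) :
    WProof (wSpec L) A →
    ∀ (W : Type) [Nonempty W] (M : CNM W),
      M.forLogic (wSpec L) → ∀ w : W, M.force A w := by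
  intro hp W _ M hM w
  exact wSound hp W M hM w
end
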